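/- Let H be a d×d symmetric positive definite real matrix with condition number κ = σ_max(H)/σ_min(H), let r : ℝ^d → ℝ be convex, let F be a quadratic function with constant Hessian H, and let w* be the global minimizer of F + r. Let ε ∈ (0, 1). Suppose for each t a symmetric positive definite matrix H̃_t satisfies (1−ε)H ⪯ H̃_t ⪯ (1+ε)H, and w_{t+1} is the global minimizer of z ↦ (1/2)‖z − (w_t − H̃_t⁻¹∇F(w_t))‖_{H̃_t}² + r(z). Then for every t ≥ 0, ‖w_t − w*‖₂ ≤ (ε/(1−ε))^t · √κ · ‖w_0 − w*‖₂. -/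

import Mathlib

/-!
At a minimiser `x` of `f + r` with `f` line-differentiable and `r` convex, `r x ≤ r z + f'(z - x)`
for every `z`. Applied to `F + r` at `w*` and to the proximal objective at `w_{t+1}`, the two
first-order conditions add up to `⟪u, H̃ u⟫ ≤ ⟪u, (H̃ - H) v⟫` for `u = w_{t+1} - w*` and
`v = w_t - w*`, because `∇F` is affine with linear part `H`. The Loewner bounds give
`⟪u, H̃ u⟫ ≥ (1 - ε) ⟪u, H u⟫` and `|⟪u, (H̃ - H) v⟫| ≤ ε ‖u‖_H ‖v‖_H`, hence
`‖u‖_H ≤ ε / (1 - ε) ‖v‖_H`. Iterating, and comparing `‖·‖_H` with the Euclidean norm through the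
extreme eigenvalues of `H`, costs the factor `√κ`.
-/
open Matrix
open scoped RealInnerProductSpace

noncomputable section

/-- The `H`-weighted norm `‖x‖_H = √(xᵀHx)` of a vector in Euclidean space. -/
def normHE {d : ℕ} (H : Matrix (Fin d) (Fin d) ℝ) (x : EuclideanSpace ℝ (Fin d)) : ℝ :=
  Real.sqrt ⟪x, Matrix.toEuclideanLin H x⟫

/-- The smallest eigenvalue of a Hermitian matrix. -/
def sMin {d : ℕ} {H : Matrix (Fin d) (Fin d) ℝ} (hH : H.IsHermitian) : ℝ :=
  ⨅ i, hH.eigenvalues i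

/-- The largest eigenvalue of a Hermitian matrix. -/
def sMax {d : ℕ} {H : Matrix (Fin d) (Fin d) ℝ} (hH : H.IsHermitian) : ℝ :=
  ⨆ i, hH.eigenvalues i

open Set

section FirstOrderOptimality

variable {E : Type*} [AddCommGroup E] [Module ℝ E]

theorem ConvexOn.le_add_of_isMinOn_add {f r : E → ℝ} {x z : E} {f' : ℝ}
    (hr : ConvexOn ℝ univ r) (hmin : IsMinOn (fun y ↦ f y + r y) univ x)
    (hf : HasLineDerivAt ℝ f f' x (z - x)) : r x ≤ r z + f' := by
  set ψ : ℝ → ℝ := fun t ↦ f (x + t • (z - x)) + ((1 - t) * r x + t * r z)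
  have hψ : HasDerivAt ψ (f' + (r z - r x)) 0 := by
    have h₁ : HasDerivAt (fun t : ℝ ↦ (1 - t) * r x) (-r x) 0 := by
      simpa using ((hasDerivAt_id (0 : ℝ)).const_sub 1).mul_const (r x)
    have h₂ : HasDerivAt (fun t : ℝ ↦ t * r z) (r z) 0 := by
      simpa using (hasDerivAt_id (0 : ℝ)).mul_const (r z)
    exact (hf.add (h₁.add h₂)).congr_deriv (by ring)
  have hψmin : IsMinOn ψ (Icc 0 1) 0 := by
    refine isMinOn_iff.mpr fun t ⟨ht0, ht1⟩ ↦ ?_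
    have hseg : x + t • (z - x) = (1 - t) • x + t • z := by module
    calc ψ 0 = f x + r x := by simp [ψ]
      _ ≤ f (x + t • (z - x)) + r (x + t • (z - x)) := isMinOn_univ_iff.mp hmin _
      _ ≤ ψ t := by
        have hconv : r ((1 - t) • x + t • z) ≤ (1 - t) * r x + t * r z :=
          hr.2 trivial trivial (by linarith) ht0 (by ring)
        simp only [ψ, hseg]
        linarith
  have hslope := hψmin.localize.hasFDerivWithinAt_nonneg hψ.hasFDerivAt.hasFDerivWithinAt
    (y := 1) (mem_posTangentConeAt_of_segment_subset (by simp [segment_eq_Icc]))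
  simp only [ContinuousLinearMap.toSpanSingleton_apply, smul_eq_mul, one_mul] at hslope
  linarith

end FirstOrderOptimality

section InnerProductSpace

variable {E : Type*} [NormedAddCommGroup E] [InnerProductSpace ℝ E]

theorem LinearMap.IsSymmetric.hasLineDerivAt_inner_sub_map_sub {T : E →ₗ[ℝ] E}
    (hT : T.IsSymmetric) (a x v : E) :
    HasLineDerivAt ℝ (fun y ↦ ⟪y - a, T (y - a)⟫ / 2) ⟪T (x - a), v⟫ x v := by
  have hline : ∀ p q : E, HasDerivAt (fun t : ℝ ↦ p + t • q) q 0 := fun p q ↦ by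
    simpa using ((hasDerivAt_id (0 : ℝ)).smul_const q).const_add p
  have := ((hline (x - a) v).inner ℝ (hline (T (x - a)) (T v))).div_const 2
  have hfun : (fun t : ℝ ↦ ⟪x + t • v - a, T (x + t • v - a)⟫ / 2) =
      fun t ↦ ⟪x - a + t • v, T (x - a) + t • T v⟫ / 2 := by
    funext t
    rw [add_sub_right_comm, map_add, map_smul]
  unfold HasLineDerivAt
  rw [hfun]
  refine this.congr_deriv ?_
  rw [zero_smul, add_zero, zero_smul, add_zero, ← hT, real_inner_comm (T (x - a))]
  ring

theorem ConvexOn.le_add_inner_of_isMinOn_prox {T : E →ₗ[ℝ] E} {r : E → ℝ} {a x : E}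
    (hT : T.IsSymmetric) (hr : ConvexOn ℝ univ r)
    (hx : IsMinOn (fun y ↦ ⟪y - a, T (y - a)⟫ / 2 + r y) univ x) (z : E) :
    r x ≤ r z + ⟪T (x - a), z - x⟫ :=
  hr.le_add_of_isMinOn_add hx (hT.hasLineDerivAt_inner_sub_map_sub a x (z - x))

theorem LinearMap.two_mul_inner_map_le_of_neg_le_of_le {M B : E →ₗ[ℝ] E} (hM : M.IsSymmetric)
    (hlo : -B ≤ M) (hhi : M ≤ B) (u v : E) :
    2 * ⟪u, M v⟫ ≤ ⟪u, B u⟫ + ⟪v, B v⟫ := by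
  have h₁ := ((LinearMap.le_def _ _).mp hhi).inner_nonneg_right (u + v)
  have h₂ := ((LinearMap.le_def _ _).mp hlo).inner_nonneg_right (u - v)
  simp only [LinearMap.sub_apply, LinearMap.neg_apply, map_add, map_sub, inner_add_left,
    inner_add_right, inner_sub_left, inner_sub_right, inner_neg_right] at h₁ h₂
  linarith [hM v u, real_inner_comm (M v) u]

theorem LinearMap.inner_map_self_le_of_le_inner_sub_map {H A : E →ₗ[ℝ] E} {ε : ℝ}
    (hε : 0 < ε) (hε₁ : ε < 1) (hH : H.IsSymmetric) (hA : A.IsSymmetric)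
    (hlo : (1 - ε) • H ≤ A) (hhi : A ≤ (1 + ε) • H) {u v : E}
    (huv : ⟪u, A u⟫ ≤ ⟪u, (A - H) v⟫) :
    ⟪u, H u⟫ ≤ (ε / (1 - ε)) ^ 2 * ⟪v, H v⟫ := by
  have h1ε : 0 < 1 - ε := by linarith
  have hA_lo : (1 - ε) * ⟪u, H u⟫ ≤ ⟪u, A u⟫ := by
    have := ((LinearMap.le_def _ _).mp hlo).inner_nonneg_right u
    simpa [inner_sub_right, inner_smul_right] using this
  have hM_lo : -(ε • H) ≤ A - H := by
    rwa [LinearMap.le_def, show A - H - -(ε • H) = A - (1 - ε) • H by module]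
  have hM_hi : A - H ≤ ε • H := by
    rwa [LinearMap.le_def, show ε • H - (A - H) = (1 + ε) • H - A by module]
  -- The weights `1 - ε` on `u` and `ε` on `v` are the AM-GM split that makes the bound sharp.
  have hpol := two_mul_inner_map_le_of_neg_le_of_le (hA.sub hH) hM_lo hM_hi
    ((1 - ε) • u) (ε • v)
  simp only [map_smul, LinearMap.smul_apply, inner_smul_left, inner_smul_right,
    RCLike.conj_to_real] at hpol
  have hM_uv : 2 * ε * (1 - ε) * ((1 - ε) * ⟪u, H u⟫) ≤ 2 * ε * (1 - ε) * ⟪u, (A - H) v⟫ :=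
    mul_le_mul_of_nonneg_left (hA_lo.trans huv) (by positivity)
  have hkey : (1 - ε) ^ 2 * ⟪u, H u⟫ ≤ ε ^ 2 * ⟪v, H v⟫ :=
    le_of_mul_le_mul_left (by linarith) hε
  rw [div_pow, div_mul_eq_mul_div, le_div_iff₀ (by positivity)]
  linarith

theorem proxNewton_step_contraction {H A : E →ₗ[ℝ] E} {r : E → ℝ} {g : E → E} {ε : ℝ}
    {w wstar a x : E} (hε : 0 < ε) (hε₁ : ε < 1) (hH : H.IsSymmetric) (hA : A.IsSymmetric)
    (hlo : (1 - ε) • H ≤ A) (hhi : A ≤ (1 + ε) • H) (hr : ConvexOn ℝ univ r)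
    (hg : g w - g wstar = H (w - wstar))
    (hstar : ∀ z, r wstar ≤ r z + ⟪g wstar, z - wstar⟫)
    (ha : A (w - a) = g w)
    (hx : IsMinOn (fun y ↦ ⟪y - a, A (y - a)⟫ / 2 + r y) univ x) :
    ⟪x - wstar, H (x - wstar)⟫ ≤ (ε / (1 - ε)) ^ 2 * ⟪w - wstar, H (w - wstar)⟫ := by
  refine LinearMap.inner_map_self_le_of_le_inner_sub_map hε hε₁ hH hA hlo hhi ?_
  have hprox := hr.le_add_inner_of_isMinOn_prox hA hx wstar
  have hopt := hstar x
  have hres : A (x - a) = A (x - wstar) - (A - H) (w - wstar) + g wstar := by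
    have : x - a = (x - wstar) - (w - wstar) + (w - a) := by abel
    rw [this, map_add, map_sub, ha, LinearMap.sub_apply, ← hg]
    abel
  rw [hres, ← neg_sub x wstar] at hprox
  simp only [inner_add_left, inner_sub_left, inner_neg_right] at hprox
  rw [real_inner_comm (A _), real_inner_comm ((A - H) _)]
  linarith

end InnerProductSpace

namespace Matrix

open scoped ComplexOrder in
theorem toEuclideanLin_le_toEuclideanLin_iff {𝕜 n : Type*} [RCLike 𝕜] [Fintype n]
    [DecidableEq n] {A B : Matrix n n 𝕜} :
    toEuclideanLin A ≤ toEuclideanLin B ↔ (B - A).PosSemidef := by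
  rw [LinearMap.le_def, ← map_sub, isPositive_toEuclideanLin_iff]

variable {n : Type*} [Fintype n] [DecidableEq n]

theorem PosDef.toEuclideanLin_toEuclideanLin_inv {A : Matrix n n ℝ} (hA : A.PosDef)
    (v : EuclideanSpace ℝ n) : toEuclideanLin A (toEuclideanLin A⁻¹ v) = v := by
  rw [← LinearMap.comp_apply, ← toLpLin_mul_same,
    mul_nonsing_inv _ ((isUnit_iff_isUnit_det A).mp hA.isUnit), toLpLin_one, LinearMap.id_apply]

theorem PosSemidef.normHE_sq {d : ℕ} {A : Matrix (Fin d) (Fin d) ℝ} (hA : A.PosSemidef)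
    (x : EuclideanSpace ℝ (Fin d)) : normHE A x ^ 2 = ⟪x, toEuclideanLin A x⟫ :=
  Real.sq_sqrt ((isPositive_toEuclideanLin_iff.mpr hA).inner_nonneg_right x)

open scoped MatrixOrder in
theorem IsHermitian.mul_norm_sq_le_inner_toEuclideanLin {H : Matrix n n ℝ} (hH : H.IsHermitian)
    {c : ℝ} (hc : ∀ i, c ≤ hH.eigenvalues i) (x : EuclideanSpace ℝ n) :
    c * ‖x‖ ^ 2 ≤ ⟪x, toEuclideanLin H x⟫ := by
  have hle : algebraMap ℝ _ c ≤ H := by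
    rw [algebraMap_le_iff_le_spectrum (ha := hH.isSelfAdjoint),
      hH.spectrum_real_eq_range_eigenvalues]
    rintro _ ⟨i, rfl⟩
    exact hc i
  have := (toEuclideanLin_le_toEuclideanLin_iff.mpr (le_iff.mp hle)).inner_nonneg_right x
  simpa [Algebra.algebraMap_eq_smul_one, inner_sub_right, inner_smul_right,
    real_inner_self_eq_norm_sq] using this

open scoped MatrixOrder in
theorem IsHermitian.inner_toEuclideanLin_le_mul_norm_sq {H : Matrix n n ℝ} (hH : H.IsHermitian)
    {c : ℝ} (hc : ∀ i, hH.eigenvalues i ≤ c) (x : EuclideanSpace ℝ n) :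
    ⟪x, toEuclideanLin H x⟫ ≤ c * ‖x‖ ^ 2 := by
  have hle : H ≤ algebraMap ℝ _ c := by
    rw [le_algebraMap_iff_spectrum_le (ha := hH.isSelfAdjoint),
      hH.spectrum_real_eq_range_eigenvalues]
    rintro _ ⟨i, rfl⟩
    exact hc i
  have := (toEuclideanLin_le_toEuclideanLin_iff.mpr (le_iff.mp hle)).inner_nonneg_right x
  simpa [Algebra.algebraMap_eq_smul_one, inner_sub_right, inner_smul_right,
    real_inner_self_eq_norm_sq] using this

theorem PosDef.norm_le_mul_sqrt_sMax_div_sMin_mul_norm {d : ℕ}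
    {H : Matrix (Fin d) (Fin d) ℝ} (hH : H.PosDef) {x y : EuclideanSpace ℝ (Fin d)} {c : ℝ}
    (hc : 0 ≤ c) (hxy : ⟪x, toEuclideanLin H x⟫ ≤ c ^ 2 * ⟪y, toEuclideanLin H y⟫) :
    ‖x‖ ≤ c * Real.sqrt (sMax hH.1 / sMin hH.1) * ‖y‖ := by
  -- For `d = 0` the infimum `sMin` is the junk value `0`, but then `x = 0`.
  rcases isEmpty_or_nonempty (Fin d) with hd | hd
  · rw [Subsingleton.elim x 0, norm_zero]
    positivity
  have hmin_le : ∀ i, sMin hH.1 ≤ hH.1.eigenvalues i := ciInf_le (Finite.bddBelow_range _)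
  have hle_max : ∀ i, hH.1.eigenvalues i ≤ sMax hH.1 := le_ciSup (Finite.bddAbove_range _)
  have hmin_pos : 0 < sMin hH.1 := by
    obtain ⟨i, hi⟩ := exists_eq_ciInf_of_finite (f := hH.1.eigenvalues)
    rw [sMin, ← hi]
    exact hH.eigenvalues_pos i
  have hmax_pos : 0 < sMax hH.1 := hmin_pos.trans_le ((hmin_le hd.some).trans (hle_max hd.some))
  have hx := hH.1.mul_norm_sq_le_inner_toEuclideanLin hmin_le x
  have hy := mul_le_mul_of_nonneg_left (hH.1.inner_toEuclideanLin_le_mul_norm_sq hle_max y)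
    (sq_nonneg c)
  refine (pow_le_pow_iff_left₀ (norm_nonneg x) (by positivity) two_ne_zero).mp ?_
  rw [mul_pow, mul_pow, Real.sq_sqrt (by positivity), mul_div_assoc', div_mul_eq_mul_div,
    le_div_iff₀ hmin_pos]
  linarith

end Matrix

/-- global convergence of sub-sampled proximal Newton when the smooth part
`F` is quadratic with constant Hessian `H` (i.e. `∇F(w) = Hw + b`), and each iterate is
`w_{t+1} = prox_r^{H̃_t}(w_t − H̃_t⁻¹∇F(w_t))`. -/
theorem sspn_global_convergence_quadratic {d : ℕ}
    (H : Matrix (Fin d) (Fin d) ℝ) (hH : H.PosDef)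
    (r : EuclideanSpace ℝ (Fin d) → ℝ) (hr : ConvexOn ℝ Set.univ r)
    (F : EuclideanSpace ℝ (Fin d) → ℝ) (hF : ContDiff ℝ 2 F)
    (b : EuclideanSpace ℝ (Fin d))
    (hquad : ∀ w, gradient F w = Matrix.toEuclideanLin H w + b)
    (wstar : EuclideanSpace ℝ (Fin d)) (hmin : ∀ w, F wstar + r wstar ≤ F w + r w)
    (ε : ℝ) (hε : 0 < ε ∧ ε < 1)
    (Htil : ℕ → Matrix (Fin d) (Fin d) ℝ)
    (hHtilPD : ∀ t, (Htil t).PosDef)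
    (happrox : ∀ t, (Htil t - (1 - ε) • H).PosSemidef ∧ ((1 + ε) • H - Htil t).PosSemidef)
    (w : ℕ → EuclideanSpace ℝ (Fin d))
    (hupdate : ∀ t, ∀ z,
      (1 / 2) * normHE (Htil t) (w (t + 1) -
          (w t - Matrix.toEuclideanLin (Htil t)⁻¹ (gradient F (w t)))) ^ 2 + r (w (t + 1)) ≤
        (1 / 2) * normHE (Htil t) (z -
          (w t - Matrix.toEuclideanLin (Htil t)⁻¹ (gradient F (w t)))) ^ 2 + r z) :
    ∀ t, ‖w t - wstar‖ ≤
      (ε / (1 - ε)) ^ t * Real.sqrt (sMax hH.1 / sMin hH.1) * ‖w 0 - wstar‖ := by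
  obtain ⟨hε₀, hε₁⟩ := hε
  set q : ℕ → ℝ := fun t ↦ ⟪w t - wstar, toEuclideanLin H (w t - wstar)⟫
  have hstar : ∀ z, r wstar ≤ r z + ⟪gradient F wstar, z - wstar⟫ := fun z ↦
    hr.le_add_of_isMinOn_add (isMinOn_univ_iff.mpr hmin)
      ((hF.differentiable two_ne_zero wstar).hasGradientAt.hasFDerivAt.hasLineDerivAt _)
  have hstep : ∀ t, q (t + 1) ≤ (ε / (1 - ε)) ^ 2 * q t := fun t ↦
    proxNewton_step_contraction hε₀ hε₁ (isSymmetric_toEuclideanLin_iff.mpr hH.1)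
      (isSymmetric_toEuclideanLin_iff.mpr (hHtilPD t).1)
      (by rw [← map_smul, toEuclideanLin_le_toEuclideanLin_iff]; exact (happrox t).1)
      (by rw [← map_smul, toEuclideanLin_le_toEuclideanLin_iff]; exact (happrox t).2) hr
      (by rw [hquad, hquad, map_sub]; abel) hstar
      (by rw [sub_sub_cancel, (hHtilPD t).toEuclideanLin_toEuclideanLin_inv])
      (isMinOn_univ_iff.mpr fun z ↦ by
        simpa only [one_div_mul_eq_div, (hHtilPD t).posSemidef.normHE_sq] using hupdate t z)
  have hgeom : ∀ t, q t ≤ ((ε / (1 - ε)) ^ t) ^ 2 * q 0 := by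
    intro t
    induction t with
    | zero => simp
    | succ n ih =>
      calc q (n + 1) ≤ (ε / (1 - ε)) ^ 2 * q n := hstep n
        _ ≤ (ε / (1 - ε)) ^ 2 * (((ε / (1 - ε)) ^ n) ^ 2 * q 0) := by gcongr
        _ = ((ε / (1 - ε)) ^ (n + 1)) ^ 2 * q 0 := by ring
  exact fun t ↦ hH.norm_le_mul_sqrt_sMax_div_sMin_mul_norm (by positivity) (hgeom t)
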